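/- Let f* be a minimum flow of a feasible flow network (G,s,t,d), and let S be the set of vertices reachable from s in the residual graph of G with respect to f*, T = V∖S. Then (S,T) is a one-way cut, every edge crossing from S to T carries flow equal to its demand, and the demand of (S,T) equals |f*|; hence (S,T) is a maximum one-way cut. -/

import Mathlib

open Finset

section Prelude

variable {V : Type*}

/-- A (directed) path in the graph with edge relation `E`: nonempty, consecutive
vertices joined by edges, and vertices pairwise distinct. -/
def IsPathOn (E : V → V → Prop) (p : List V) : Prop :=
  p ≠ [] ∧ p.Chain' E ∧ p.Nodup

/-- Reachability in the graph with edge relation `E`. -/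
def Reaches (E : V → V → Prop) : V → V → Prop := Relation.ReflTransGen E

/-- The edges of a path, as the list of consecutive pairs of vertices. -/
def pathEdges (p : List V) : List (V × V) := p.zip p.tail

/-- A path cover: a multiset of paths such that every vertex is on some path. -/
def IsPathCover (E : V → V → Prop) (P : Multiset (List V)) : Prop :=
  (∀ p ∈ P, IsPathOn E p) ∧ ∀ v : V, ∃ p ∈ P, v ∈ p

/-- The width of a graph: the minimum size of a path cover. -/
noncomputable def gwidth (E : V → V → Prop) : ℕ :=
  sInf {n | ∃ P : Multiset (List V), IsPathCover E P ∧ Multiset.card P = n}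

/-- A DAG: no proper (directed) cycles. -/
def IsDAG (E : V → V → Prop) : Prop := ∀ v, ¬ Relation.TransGen E v v

/-- The edge relation of a finite edge set. -/
def edgeRel (E : Finset (V × V)) : V → V → Prop := fun a b => (a, b) ∈ E

/-- Multiplicity of an edge with respect to a multiset of paths. -/
def mult [DecidableEq V] (P : Multiset (List V)) (e : V × V) : ℕ :=
  Multiset.countP (fun p => e ∈ pathEdges p) P

/-- A flow network: a finite edge set, source, sink, and lower bounds (demands). -/
structure FlowNet (V : Type*) where
  E : Finset (V × V)
  s : V
  t : V
  d : V × V → ℕ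

/-- A flow: supported on edges, satisfying the demands, and flow conservation at
every vertex other than the source and the sink. -/
def IsFlow [Fintype V] (N : FlowNet V) (f : V × V → ℕ) : Prop :=
  (∀ e, e ∉ N.E → f e = 0) ∧ (∀ e ∈ N.E, N.d e ≤ f e) ∧
  ∀ v : V, v ≠ N.s → v ≠ N.t → (∑ u : V, f (u, v)) = ∑ u : V, f (v, u)

/-- The size of a flow: net outflow at the source. -/
def flowSize [Fintype V] (N : FlowNet V) (f : V × V → ℕ) : ℤ :=
  (∑ u : V, (f (N.s, u) : ℤ)) - ∑ u : V, (f (u, N.s) : ℤ)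

/-- An `st`-cut, given by the source side `S` (the sink side is the complement). -/
def IsCut (N : FlowNet V) (S : Set V) : Prop := N.s ∈ S ∧ N.t ∉ S

/-- A one-way cut: a cut with no edge crossing from `T = Sᶜ` to `S`. -/
def IsOwCut (N : FlowNet V) (S : Set V) : Prop :=
  IsCut N S ∧ ∀ e ∈ N.E, e.1 ∉ S → e.2 ∉ S

open Classical in
/-- The demand of a cut: sum of demands of edges crossing from `S` to `T`. -/
noncomputable def cutDemand (N : FlowNet V) (S : Set V) : ℕ :=
  ∑ e ∈ N.E.filter (fun e => e.1 ∈ S ∧ e.2 ∉ S), N.d e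

open Classical in
/-- The net flow across a cut: flow from `S` to `T` minus flow from `T` to `S`. -/
noncomputable def cutFlow (N : FlowNet V) (S : Set V) (f : V × V → ℕ) : ℤ :=
  (∑ e ∈ N.E.filter (fun e => e.1 ∈ S ∧ e.2 ∉ S), (f e : ℤ))
    - ∑ e ∈ N.E.filter (fun e => e.1 ∉ S ∧ e.2 ∈ S), (f e : ℤ)

/-- The residual graph of a network w.r.t. a flow `f`: reverse edges of all edges,
plus the edges whose flow strictly exceeds the demand. -/
def ResidualEdge (N : FlowNet V) (f : V × V → ℕ) (u v : V) : Prop :=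
  (v, u) ∈ N.E ∨ ((u, v) ∈ N.E ∧ N.d (u, v) < f (u, v))

/-- Vertices of the flow reduction: two copies of each vertex, plus source/sink. -/
abbrev FR (V : Type*) := (V ⊕ V) ⊕ Bool

def vinF (v : V) : FR V := Sum.inl (Sum.inl v)
def voutF (v : V) : FR V := Sum.inl (Sum.inr v)
def fsrc : FR V := Sum.inr false
def fsnk : FR V := Sum.inr true

/-- Demands of the flow reduction: `1` on each edge `(vin v, vout v)`, else `0`. -/
def redD [DecidableEq V] : FR V × FR V → ℕ
  | (Sum.inl (Sum.inl a), Sum.inl (Sum.inr b)) => if a = b then 1 else 0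
  | _ => 0

/-- The flow reduction of the DAG with edge set `E`. -/
def redNet [Fintype V] [DecidableEq V] (E : Finset (V × V)) : FlowNet (FR V) where
  E := (univ.image fun v : V => (fsrc, vinF v)) ∪ (univ.image fun v : V => (voutF v, fsnk))
        ∪ (univ.image fun v : V => (vinF v, voutF v))
        ∪ (E.image fun e => (voutF e.1, vinF e.2))
  s := fsrc
  t := fsnk
  d := redD

/-- The layered cut `L^{≤ l}`: the source together with all split vertices of level `≤ l`. -/
def layerCut (ℓ : FR V → ℤ) (l : ℤ) : Set (FR V) :=
  {x | x = fsrc ∨ ((∃ v : V, x = vinF v ∨ x = voutF v) ∧ ℓ x ≤ l)}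

open Classical in
/-- The layered antichain `A^l`. -/
noncomputable def layerAntichain [Fintype V] (ℓ : FR V → ℤ) (l : ℤ) : Finset V :=
  univ.filter (fun v => ℓ (vinF v) ≤ l ∧ l < ℓ (voutF v))

end Prelude

/-!
If `t` were reachable from `s` in the residual graph of the minimum flow `f`, a simple residual
`s`–`t` path would let us push one unit of flow back from `t` to `s`: lower the flow on the path
edges that carry more than their demand, and raise it on the edges whose reverses the path uses.
All demands and conservation laws survive and `|f|` drops by one. So the residual-reachable set
`S` is an `st`-cut, and since it is closed under residual edges, no edge enters `S` and every
edge leaving it is tight. Summing conservation over `S` shows that the net flow across any cut is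
`|f|`; for a one-way cut this is at least the demand, with equality for `S`.
-/

namespace List

variable {α β : Type*}

theorem exists_nodup_isChain_cons_of_relationReflTransGen {r : α → α → Prop} {a b : α}
    (h : Relation.ReflTransGen r a b) :
    ∃ l, IsChain r (a :: l) ∧ (a :: l).Nodup ∧ (a :: l).getLast (cons_ne_nil a l) = b := by
  induction h using Relation.ReflTransGen.head_induction_on with
  | refl => exact ⟨[], isChain_singleton b, nodup_singleton b, rfl⟩
  | @head a c hac _ ih =>
    obtain ⟨l, hchain, hnodup, hlast⟩ := ih
    by_cases ha : a ∈ c :: l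
    · obtain ⟨x, y, hxy⟩ := append_of_mem ha
      rw [hxy] at hchain hnodup
      refine ⟨y, hchain.right_of_append, hnodup.sublist (sublist_append_right x _), ?_⟩
      simp [← hlast, hxy]
    · exact ⟨c :: l, isChain_cons_cons.mpr ⟨hac, hchain⟩, nodup_cons.mpr ⟨ha, hnodup⟩,
        hlast⟩

theorem sum_count_mk_eq_count_map_fst [Fintype β] [DecidableEq α] [DecidableEq β]
    (L : List (α × β)) (a : α) :
    ∑ b, L.count (a, b) = (L.map Prod.fst).count a := by
  induction L with
  | nil => simp
  | cons x L ih =>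
    simp only [count_cons, Finset.sum_add_distrib, ih, map_cons, beq_iff_eq]
    congr 1
    obtain ⟨x1, x2⟩ := x
    rcases eq_or_ne x1 a with rfl | hx <;> simp [*]

theorem sum_count_mk_eq_count_map_snd [Fintype α] [DecidableEq α] [DecidableEq β]
    (L : List (α × β)) (b : β) :
    ∑ a, L.count (a, b) = (L.map Prod.snd).count b := by
  induction L with
  | nil => simp
  | cons x L ih =>
    simp only [count_cons, Finset.sum_add_distrib, ih, map_cons, beq_iff_eq]
    congr 1
    obtain ⟨x1, x2⟩ := x
    rcases eq_or_ne x2 b with rfl | hx <;> simp [*]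

theorem count_dropLast_add_ite_getLast [DecidableEq α] {l : List α} (hl : l ≠ []) (v : α) :
    l.dropLast.count v + (if v = l.getLast hl then 1 else 0) = l.count v := by
  conv_rhs => rw [← dropLast_append_getLast hl]
  simp only [count_append, count_singleton]
  split_ifs <;> simp_all

end List

section PathEdges

variable {V : Type*}

theorem pathEdges_cons_cons (a b : V) (l : List V) :
    pathEdges (a :: b :: l) = (a, b) :: pathEdges (b :: l) := rfl

theorem map_fst_pathEdges : ∀ p : List V, (pathEdges p).map Prod.fst = p.dropLast
  | [] => rfl
  | [_] => rfl
  | a :: b :: l => by rw [pathEdges_cons_cons, List.map_cons, map_fst_pathEdges (b :: l)]; rfl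

theorem map_snd_pathEdges (p : List V) : (pathEdges p).map Prod.snd = p.tail :=
  List.map_snd_zip (by simp)

theorem List.Nodup.pathEdges {p : List V} (hp : p.Nodup) : (pathEdges p).Nodup :=
  .of_map Prod.fst (by rw [map_fst_pathEdges]; exact hp.sublist (List.dropLast_sublist p))

theorem List.IsChain.rel_of_mem_pathEdges {r : V → V → Prop} :
    ∀ {p : List V}, p.IsChain r → ∀ {a b : V}, (a, b) ∈ pathEdges p → r a b
  | [], _, _, _, h => by simp [pathEdges] at h
  | [_], _, _, _, h => by simp [pathEdges] at h
  | x :: y :: l, hc, a, b, h => by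
    rw [List.isChain_cons_cons] at hc
    rw [pathEdges_cons_cons, List.mem_cons, Prod.mk.injEq] at h
    rcases h with ⟨rfl, rfl⟩ | h
    · exact hc.1
    · exact hc.2.rel_of_mem_pathEdges h

end PathEdges

section NetOut

variable {V : Type*} [Fintype V]

def netOut (h : V × V → ℤ) (v : V) : ℤ := ∑ u, h (v, u) - ∑ u, h (u, v)

theorem netOut_add (h k : V × V → ℤ) (v : V) :
    netOut (fun e => h e + k e) v = netOut h v + netOut k v := by
  simp only [netOut, Finset.sum_add_distrib]
  ring

theorem netOut_natCast_eq_zero_iff (g : V × V → ℕ) (v : V) :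
    netOut (fun e => (g e : ℤ)) v = 0 ↔ ∑ u, g (u, v) = ∑ u, g (v, u) := by
  rw [netOut, sub_eq_zero, eq_comm]
  norm_cast

theorem flowSize_eq_netOut (N : FlowNet V) (f : V × V → ℕ) :
    flowSize N f = netOut (fun e => (f e : ℤ)) N.s := rfl

theorem sum_mul_netOut (χ : V → ℤ) (h : V × V → ℤ) :
    ∑ v, χ v * netOut h v = ∑ e, (χ e.1 - χ e.2) * h e := by
  simp only [netOut, mul_sub, Finset.mul_sum, Finset.sum_sub_distrib, sub_mul,
    Fintype.sum_prod_type]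
  rw [Finset.sum_comm (f := fun v u => χ v * h (u, v))]

variable {N : FlowNet V} {f : V × V → ℕ}

theorem IsFlow.netOut_eq_zero (hf : IsFlow N f) {v : V} (hs : v ≠ N.s) (ht : v ≠ N.t) :
    netOut (fun e => (f e : ℤ)) v = 0 :=
  (netOut_natCast_eq_zero_iff f v).mpr (hf.2.2 v hs ht)

theorem IsFlow.add {δ : V × V → ℤ} (hf : IsFlow N f) (hsupp : ∀ e ∉ N.E, δ e = 0)
    (hdem : ∀ e ∈ N.E, (N.d e : ℤ) ≤ f e + δ e)
    (hcons : ∀ v, v ≠ N.s → v ≠ N.t → netOut δ v = 0) :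
    IsFlow N (fun e => (f e + δ e).toNat) ∧
      flowSize N (fun e => (f e + δ e).toNat) = flowSize N f + netOut δ N.s := by
  have hnonneg : ∀ e, 0 ≤ (f e : ℤ) + δ e := fun e => by
    by_cases he : e ∈ N.E
    · exact (Nat.cast_nonneg _).trans (hdem e he)
    · simp [hf.1 e he, hsupp e he]
  have hcast : ∀ e, (((f e + δ e).toNat : ℕ) : ℤ) = f e + δ e :=
    fun e => Int.toNat_of_nonneg (hnonneg e)
  have hnet : ∀ v, netOut (fun e => (((f e + δ e).toNat : ℕ) : ℤ)) v =
      netOut (fun e => (f e : ℤ)) v + netOut δ v := fun v => by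
    simp only [hcast, netOut_add]
  refine ⟨⟨fun e he => by simp [hf.1 e he, hsupp e he],
    fun e he => (Int.le_toNat (hnonneg e)).mpr (hdem e he), fun v hs ht => ?_⟩,
    by rw [flowSize_eq_netOut, hnet]; rfl⟩
  refine (netOut_natCast_eq_zero_iff (fun e => (f e + δ e).toNat) v).mp ?_
  rw [hnet, hf.netOut_eq_zero hs ht, hcons v hs ht, add_zero]

end NetOut

section Augmentation

variable {V : Type*} [DecidableEq V] (N : FlowNet V) (f : V × V → ℕ)

-- Counting multiplicities rather than testing membership makes the conservation identity hold
-- for every list; only the demand bound needs `p` to be a simple path.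
def pathDecrement (p : List V) (e : V × V) : ℤ :=
  (if N.d e.swap < f e.swap then 0 else (pathEdges p).count e.swap) -
    if N.d e < f e then (pathEdges p).count e else 0

theorem netOut_pathDecrement [Fintype V] (a : V) (l : List V) (v : V) :
    netOut (pathDecrement N f (a :: l)) v =
      (if v = (a :: l).getLast (List.cons_ne_nil a l) then 1 else 0) - if v = a then 1 else 0 := by
  set P := pathEdges (a :: l)
  have hpoint : ∀ u, pathDecrement N f (a :: l) (v, u) - pathDecrement N f (a :: l) (u, v) =
      (P.count (u, v) : ℤ) - P.count (v, u) := fun u => by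
    simp only [pathDecrement, Prod.swap_prod_mk]
    split_ifs <;> ring
  have hin : ∑ u, (P.count (u, v) : ℤ) = l.count v := by
    exact_mod_cast (P.sum_count_mk_eq_count_map_snd v).trans (by rw [map_snd_pathEdges]; rfl)
  have hout : ∑ u, (P.count (v, u) : ℤ) = (a :: l).dropLast.count v := by
    exact_mod_cast (P.sum_count_mk_eq_count_map_fst v).trans (by rw [map_fst_pathEdges])
  have hsplit := List.count_dropLast_add_ite_getLast (List.cons_ne_nil a l) v
  simp only [List.count_cons, beq_iff_eq, @eq_comm _ a v] at hsplit
  rw [netOut, ← Finset.sum_sub_distrib, Finset.sum_congr rfl fun u _ => hpoint u,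
    Finset.sum_sub_distrib, hin, hout]
  split_ifs at hsplit ⊢ <;> omega

variable {N f}

theorem le_add_pathDecrement {p : List V} (hp : p.Nodup) {e : V × V} (he : N.d e ≤ f e) :
    (N.d e : ℤ) ≤ f e + pathDecrement N f p e := by
  have hcount := List.nodup_iff_count_le_one.mp hp.pathEdges e
  unfold pathDecrement
  split_ifs <;> omega

theorem pathDecrement_eq_zero_of_notMem [Fintype V] (hf : IsFlow N f) {p : List V}
    (hp : p.IsChain (ResidualEdge N f)) {e : V × V} (he : e ∉ N.E) :
    pathDecrement N f p e = 0 := by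
  obtain ⟨a, b⟩ := e
  have hslack : (b, a) ∈ pathEdges p → N.d (b, a) < f (b, a) :=
    fun hmem => ((hp.rel_of_mem_pathEdges hmem).resolve_left he).2
  simpa [pathDecrement, hf.1 _ he, List.count_eq_zero] using
    fun hle hmem => (hslack hmem).not_ge hle

end Augmentation

section MinimumFlow

variable {V : Type*} [Fintype V] {N : FlowNet V} {f : V × V → ℕ}

theorem IsFlow.not_reflTransGen_residualEdge (hst : N.s ≠ N.t) (hf : IsFlow N f)
    (hmin : ∀ g, IsFlow N g → flowSize N f ≤ flowSize N g) :
    ¬ Relation.ReflTransGen (ResidualEdge N f) N.s N.t := by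
  classical
  intro hreach
  obtain ⟨l, hchain, hnodup, hlast⟩ :=
    List.exists_nodup_isChain_cons_of_relationReflTransGen hreach
  have hnet := netOut_pathDecrement N f N.s l
  rw [hlast] at hnet
  obtain ⟨hg, hsize⟩ := hf.add (fun e he => pathDecrement_eq_zero_of_notMem hf hchain he)
    (fun e he => le_add_pathDecrement hnodup (hf.2.1 e he)) (fun v hs ht => by simp [hnet, hs, ht])
  have := hmin _ hg
  simp [hsize, hnet, hst] at this

end MinimumFlow

section Cuts

variable {V : Type*} {N : FlowNet V} {f : V × V → ℕ} {S : Set V}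

open Classical in
theorem IsOwCut.cutFlow_eq (hS : IsOwCut N S) :
    cutFlow N S f = ∑ e ∈ N.E.filter (fun e => e.1 ∈ S ∧ e.2 ∉ S), (f e : ℤ) := by
  have hback : N.E.filter (fun e => e.1 ∉ S ∧ e.2 ∈ S) = ∅ :=
    Finset.filter_eq_empty_iff.mpr fun e he h => hS.2 e he h.1 h.2
  rw [cutFlow, hback, Finset.sum_empty, sub_zero]

variable [Fintype V]

open Classical in
theorem IsFlow.flowSize_eq_cutFlow (hf : IsFlow N f) (hS : IsCut N S) :
    flowSize N f = cutFlow N S f := by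
  set χ : V → ℤ := fun v => if v ∈ S then 1 else 0
  have hsource : ∑ v, χ v * netOut (fun e => (f e : ℤ)) v = flowSize N f := by
    rw [Finset.sum_eq_single N.s, flowSize_eq_netOut]
    · simp [χ, hS.1]
    · intro v _ hvs
      by_cases hv : v ∈ S
      · rw [hf.netOut_eq_zero hvs (fun hvt => hS.2 (hvt ▸ hv)), mul_zero]
      · simp [χ, hv]
    · simp
  have hcross : ∀ e, (χ e.1 - χ e.2) * f e =
      (if e.1 ∈ S ∧ e.2 ∉ S then (f e : ℤ) else 0) -
        if e.1 ∉ S ∧ e.2 ∈ S then (f e : ℤ) else 0 :=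
    fun e => by simp only [χ]; split_ifs <;> simp_all
  have hsupp : ∀ e ∉ N.E, (χ e.1 - χ e.2) * f e = 0 := fun e he => by simp [hf.1 e he]
  rw [← hsource, sum_mul_netOut,
    ← Finset.sum_subset (Finset.subset_univ N.E) (fun e _ => hsupp e), cutFlow,
    Finset.sum_filter, Finset.sum_filter, ← Finset.sum_sub_distrib]
  exact Finset.sum_congr rfl fun e _ => hcross e

theorem IsFlow.cutDemand_le_flowSize (hf : IsFlow N f) (hS : IsOwCut N S) :
    (cutDemand N S : ℤ) ≤ flowSize N f := by
  classical
  rw [hf.flowSize_eq_cutFlow hS.1, hS.cutFlow_eq, cutDemand, Nat.cast_sum]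
  exact Finset.sum_le_sum fun e he => by exact_mod_cast hf.2.1 e (Finset.mem_of_mem_filter e he)

theorem IsFlow.cutDemand_eq_flowSize (hf : IsFlow N f) (hS : IsOwCut N S)
    (hsat : ∀ e ∈ N.E, e.1 ∈ S → e.2 ∉ S → f e = N.d e) :
    (cutDemand N S : ℤ) = flowSize N f := by
  classical
  rw [hf.flowSize_eq_cutFlow hS.1, hS.cutFlow_eq, cutDemand, Nat.cast_sum]
  refine Finset.sum_congr rfl fun e he => ?_
  obtain ⟨heE, h1, h2⟩ := Finset.mem_filter.mp he
  rw [hsat e heE h1 h2]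

end Cuts

/-- if `f` is a minimum flow and `S` is the set of vertices reachable from
`s` in the residual graph, then `(S, Sᶜ)` is a one-way cut, every crossing edge carries
flow equal to its demand, its demand equals `|f|`, and it is a maximum one-way cut. -/
theorem stmt_4 {V : Type*} [Fintype V] (N : FlowNet V) (hst : N.s ≠ N.t)
    (f : V × V → ℕ) (hf : IsFlow N f)
    (hmin : ∀ g, IsFlow N g → flowSize N f ≤ flowSize N g)
    (S : Set V) (hS : S = {v | Relation.ReflTransGen (ResidualEdge N f) N.s v}) :
    IsOwCut N S ∧ (∀ e ∈ N.E, e.1 ∈ S → e.2 ∉ S → f e = N.d e) ∧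
      (cutDemand N S : ℤ) = flowSize N f ∧
      ∀ S', IsOwCut N S' → cutDemand N S' ≤ cutDemand N S := by
  have hmem : ∀ v, v ∈ S ↔ Relation.ReflTransGen (ResidualEdge N f) N.s v := fun v => by
    rw [hS]; rfl
  have hclosed : ∀ u v, u ∈ S → ResidualEdge N f u v → v ∈ S :=
    fun u v hu huv => (hmem v).mpr (((hmem u).mp hu).tail huv)
  have hcut : IsOwCut N S :=
    ⟨⟨(hmem _).mpr .refl,
      fun ht => hf.not_reflTransGen_residualEdge hst hmin ((hmem _).mp ht)⟩,
      fun e he h1 h2 => h1 (hclosed _ _ h2 (.inl he))⟩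
  have hsat : ∀ e ∈ N.E, e.1 ∈ S → e.2 ∉ S → f e = N.d e := fun e he h1 h2 =>
    ((hf.2.1 e he).eq_or_lt.resolve_right fun hlt => h2 (hclosed _ _ h1 (.inr ⟨he, hlt⟩))).symm
  have hdem := hf.cutDemand_eq_flowSize hcut hsat
  exact ⟨hcut, hsat, hdem,
    fun S' hS' => by exact_mod_cast hdem ▸ hf.cutDemand_le_flowSize hS'⟩
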